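/- Let a > 0 and let (T,n,b) solve the Frenet system with curvature c ≡ a, torsion τ(x) = x/2, and orthonormal frame at 0. Then the limits A⁺ = lim_{x→+∞} T(x) and A⁻ = lim_{x→−∞} T(x) exist in ℝ³ and are unit vectors. -/

import Mathlib

open Matrix Filter

/-- An orthonormal frame of three vectors in ℝ³ (Euclidean inner product). -/
def IsOrthonormalFrame (T n b : Fin 3 → ℝ) : Prop :=
  T ⬝ᵥ T = 1 ∧ n ⬝ᵥ n = 1 ∧ b ⬝ᵥ b = 1 ∧
  T ⬝ᵥ n = 0 ∧ T ⬝ᵥ b = 0 ∧ n ⬝ᵥ b = 0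

/-!
The Frenet equations have an antisymmetric coefficient matrix, so the Gram matrix of the frame
stays the identity; in particular `‖b‖ ≤ 1`. Since `b' = -(x/2) n`, the corrected tangent
`T + (2a/x) b` has derivative `-(2a/x²) b`, which is integrable at `+∞`; hence it converges, and
so does `T` because `(2a/x) b → 0`. The reflection `(T, n, b)(x) ↦ (T, -n, -b)(-x)` preserves the
system and handles `-∞`.
-/

open Topology Set MeasureTheory

section DotProduct

variable {ι : Type*} [Fintype ι]

theorem HasDerivAt.dotProduct {f g : ℝ → ι → ℝ} {f' g' : ι → ℝ} {x : ℝ}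
    (hf : HasDerivAt f f' x) (hg : HasDerivAt g g' x) :
    HasDerivAt (fun y => f y ⬝ᵥ g y) (f' ⬝ᵥ g x + f x ⬝ᵥ g') x := by
  have h i : HasDerivAt (fun y => f y i * g y i) (f' i * g x i + f x i * g' i) x :=
    (hasDerivAt_pi.mp hf i).mul (hasDerivAt_pi.mp hg i)
  have := HasDerivAt.fun_sum (u := Finset.univ) fun i _ => h i
  simpa [_root_.dotProduct, Finset.sum_add_distrib] using this

theorem norm_le_one_of_dotProduct_self_eq_one {v : ι → ℝ} (hv : v ⬝ᵥ v = 1) : ‖v‖ ≤ 1 := by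
  refine (pi_norm_le_iff_of_nonneg zero_le_one).2 fun i => abs_le_one_iff_mul_self_le_one.2 ?_
  calc v i * v i ≤ v ⬝ᵥ v :=
        Finset.single_le_sum (fun j _ => mul_self_nonneg (v j)) (Finset.mem_univ i)
    _ = 1 := hv

end DotProduct

theorem Matrix.sum_apply_mul_commutator_apply_eq_zero {κ R : Type*} [Fintype κ] [CommRing R]
    {D : Matrix κ κ R} (hD : Dᵀ = D) (K : Matrix κ κ R) :
    ∑ k, ∑ l, D k l * (K * D - D * K) k l = 0 := by
  calc ∑ k, ∑ l, D k l * (K * D - D * K) k l = trace (Dᵀ * (K * D - D * K)) := by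
        rw [trace, Finset.sum_comm]; rfl
    _ = 0 := by
        rw [hD, Matrix.mul_sub, trace_sub, trace_mul_cycle' D K D, sub_self]

section Gram

variable {ι κ : Type*} [Fintype ι] [Fintype κ]

theorem hasDerivAt_mul_transpose_apply {F : ℝ → Matrix κ ι ℝ} {K : Matrix κ κ ℝ} {x : ℝ}
    (hF : ∀ k, HasDerivAt (fun y => F y k) ((K * F x) k) x) (k l : κ) :
    HasDerivAt (fun y => (F y * (F y)ᵀ) k l)
      ((K * (F x * (F x)ᵀ) + F x * (F x)ᵀ * Kᵀ) k l) x := by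
  refine ((hF k).dotProduct (hF l)).congr_deriv ?_
  rw [Matrix.add_apply, ← Matrix.mul_assoc, Matrix.mul_assoc (F x), ← transpose_mul]
  rfl

variable [DecidableEq κ]

/-- The Lyapunov function `∑ₖₗ (F Fᵀ - 1)ₖₗ²` is constant: its derivative pairs the symmetric
`D = F Fᵀ - 1` with the commutator `K D - D K`. -/
theorem mul_transpose_eq_one_of_hasDerivAt {F : ℝ → Matrix κ ι ℝ} {K : ℝ → Matrix κ κ ℝ}
    (hK : ∀ x, (K x)ᵀ = -K x) (hF : ∀ x k, HasDerivAt (fun y => F y k) ((K x * F x) k) x)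
    {x₀ : ℝ} (h₀ : F x₀ * (F x₀)ᵀ = 1) (x : ℝ) : F x * (F x)ᵀ = 1 := by
  set G : ℝ → Matrix κ κ ℝ := fun y => F y * (F y)ᵀ
  have hGsymm y : (G y - 1)ᵀ = G y - 1 := by simp [G, transpose_sub, transpose_mul]
  have hG' y k l :
      HasDerivAt (fun z => (G z - 1) k l) ((K y * (G y - 1) - (G y - 1) * K y) k l) y := by
    refine ((hasDerivAt_mul_transpose_apply (hF y) k l).sub_const
      ((1 : Matrix κ κ ℝ) k l)).congr_deriv ?_
    have hcomm : K y * (G y - 1) - (G y - 1) * K y = K y * G y + G y * (K y)ᵀ := by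
      rw [hK]; noncomm_ring
    rw [hcomm]
  have hφ' y : HasDerivAt (fun z => ∑ k, ∑ l, (G z - 1) k l ^ 2) 0 y := by
    refine (HasDerivAt.fun_sum (u := Finset.univ) fun k _ => HasDerivAt.fun_sum
      (u := Finset.univ) fun l _ => (hG' y k l).pow 2).congr_deriv ?_
    norm_num only [pow_one, mul_assoc, ← Finset.mul_sum,
      sum_apply_mul_commutator_apply_eq_zero (hGsymm y)]
  have hφ : ∑ k, ∑ l, (G x - 1) k l ^ 2 = 0 := by
    rw [is_const_of_deriv_eq_zero (fun y => (hφ' y).differentiableAt) (fun y => (hφ' y).deriv)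
      x x₀]
    simp [G, h₀]
  ext k l
  have hrow := (Finset.sum_eq_zero_iff_of_nonneg fun k _ => Finset.sum_nonneg fun l _ =>
    sq_nonneg ((G x - 1) k l)).1 hφ k (Finset.mem_univ k)
  have hentry := (Finset.sum_eq_zero_iff_of_nonneg fun l _ => sq_nonneg ((G x - 1) k l)).1 hrow l
    (Finset.mem_univ l)
  simpa [sub_eq_zero] using hentry

end Gram

section Tail

variable {E : Type*} [NormedAddCommGroup E] [NormedSpace ℝ E]

theorem hasDerivAt_add_div_smul_of_frenet {a : ℝ} {T n b : ℝ → E} {x : ℝ}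
    (hT : HasDerivAt T (a • n x) x) (hb : HasDerivAt b (-((x / 2) • n x)) x) (hx : x ≠ 0) :
    HasDerivAt (fun y => T y + (2 * a / y) • b y) ((-(2 * a) / x ^ 2) • b x) x := by
  have hinv := (hasDerivAt_inv hx).const_mul (2 * a)
  simp only [← div_eq_mul_inv] at hinv
  refine (hT.add (hinv.smul hb)).congr_deriv ?_
  have hcancel : 2 * a / x * (x / 2) = a := by field_simp
  simp only [smul_neg, smul_smul, hcancel]
  module

theorem integrableOn_Ioi_div_sq_smul {C t : ℝ} {b : ℝ → E} (hb : Continuous b)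
    (hbC : ∀ x, ‖b x‖ ≤ C) (ht : 0 < t) (c : ℝ) :
    IntegrableOn (fun x => (c / x ^ 2) • b x) (Ioi t) := by
  have hcont : ContinuousOn (fun x : ℝ => (c / x ^ 2) • b x) (Ioi t) :=
    (continuousOn_const.div (by fun_prop) fun x hx =>
      pow_ne_zero 2 (ht.trans hx).ne').smul hb.continuousOn
  refine Integrable.mono' ((integrableOn_Ioi_rpow_of_lt (by norm_num : (-2 : ℝ) < -1)
    ht).const_mul (|c| * C)) (hcont.aestronglyMeasurable measurableSet_Ioi) ?_
  refine ae_restrict_of_forall_mem measurableSet_Ioi fun x hx => ?_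
  have hx₀ : 0 < x := ht.trans hx
  calc ‖(c / x ^ 2) • b x‖ = |c| / x ^ 2 * ‖b x‖ := by
        rw [norm_smul, norm_div, norm_pow, Real.norm_eq_abs, Real.norm_eq_abs, abs_of_pos hx₀]
    _ ≤ |c| / x ^ 2 * C := by gcongr; exact hbC x
    _ = |c| * C * x ^ (-2 : ℝ) := by rw [Real.rpow_neg hx₀.le, Real.rpow_two]; ring

theorem exists_tendsto_atTop_of_hasDerivAt_of_norm_le [CompleteSpace E] {a C : ℝ}
    {T n b : ℝ → E} (hT : ∀ x, HasDerivAt T (a • n x) x) (hb : ∀ x, HasDerivAt b (-((x / 2) • n x)) x)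
    (hbC : ∀ x, ‖b x‖ ≤ C) : ∃ A, Tendsto T atTop (𝓝 A) := by
  have hbcont : Continuous b := continuous_iff_continuousAt.2 fun x => (hb x).continuousAt
  have hlim := tendsto_limUnder_of_hasDerivAt_of_integrableOn_Ioi
    (fun x hx => hasDerivAt_add_div_smul_of_frenet (hT x) (hb x) (zero_lt_one.trans hx).ne')
    (integrableOn_Ioi_div_sq_smul hbcont hbC one_pos _)
  have hsmall : Tendsto (fun y => (2 * a / y) • b y) atTop (𝓝 0) :=
    (tendsto_const_nhds.div_atTop tendsto_id).zero_smul_isBoundedUnder_le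
      (isBoundedUnder_of ⟨C, hbC⟩)
  exact ⟨_, by simpa using hlim.sub hsmall⟩

end Tail

def frenetMatrix (κ τ : ℝ) : Matrix (Fin 3) (Fin 3) ℝ :=
  !![0, κ, 0; -κ, 0, τ; 0, -τ, 0]

theorem frenetMatrix_transpose (κ τ : ℝ) : (frenetMatrix κ τ)ᵀ = -frenetMatrix κ τ := by
  ext i j
  fin_cases i <;> fin_cases j <;> simp [frenetMatrix]

theorem isOrthonormalFrame_iff_mul_transpose_eq_one {u v w : Fin 3 → ℝ} :
    IsOrthonormalFrame u v w ↔ of ![u, v, w] * (of ![u, v, w])ᵀ = 1 := by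
  have entry i j : (of ![u, v, w] * (of ![u, v, w])ᵀ) i j = ![u, v, w] i ⬝ᵥ ![u, v, w] j := rfl
  rw [← Matrix.ext_iff]
  simp only [entry]
  simp [Fin.forall_fin_succ, IsOrthonormalFrame, one_apply, dotProduct_comm v u,
    dotProduct_comm w u, dotProduct_comm w v]
  tauto

theorem IsOrthonormalFrame.neg_normal_binormal {u v w : Fin 3 → ℝ}
    (h : IsOrthonormalFrame u v w) : IsOrthonormalFrame u (-v) (-w) := by
  obtain ⟨huu, hvv, hww, huv, huw, hvw⟩ := h
  exact ⟨huu, by simpa, by simpa, by simpa, by simpa, by simpa⟩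

structure IsSelfSimilarFrenet {E : Type*} [NormedAddCommGroup E] [NormedSpace ℝ E]
    (a : ℝ) (T n b : ℝ → E) : Prop where
  hasDerivAt_tangent : ∀ x, HasDerivAt T (a • n x) x
  hasDerivAt_normal : ∀ x, HasDerivAt n (-(a • T x) + (x / 2) • b x) x
  hasDerivAt_binormal : ∀ x, HasDerivAt b (-((x / 2) • n x)) x

namespace IsSelfSimilarFrenet

theorem comp_neg {E : Type*} [NormedAddCommGroup E] [NormedSpace ℝ E] {a : ℝ} {T n b : ℝ → E}
    (h : IsSelfSimilarFrenet a T n b) :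
    IsSelfSimilarFrenet a (fun x => T (-x)) (fun x => -n (-x)) (fun x => -b (-x)) where
  hasDerivAt_tangent x :=
    ((h.hasDerivAt_tangent (-x)).scomp x (hasDerivAt_neg x)).congr_deriv (by module)
  hasDerivAt_normal x :=
    ((h.hasDerivAt_normal (-x)).scomp x (hasDerivAt_neg x)).neg.congr_deriv (by module)
  hasDerivAt_binormal x :=
    ((h.hasDerivAt_binormal (-x)).scomp x (hasDerivAt_neg x)).neg.congr_deriv (by module)

variable {a : ℝ} {T n b : ℝ → Fin 3 → ℝ}

theorem isOrthonormalFrame (h : IsSelfSimilarFrenet a T n b) {x₀ : ℝ}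
    (h₀ : IsOrthonormalFrame (T x₀) (n x₀) (b x₀)) (x : ℝ) :
    IsOrthonormalFrame (T x) (n x) (b x) := by
  rw [isOrthonormalFrame_iff_mul_transpose_eq_one] at h₀ ⊢
  refine mul_transpose_eq_one_of_hasDerivAt (F := fun x => of ![T x, n x, b x])
    (K := fun x => frenetMatrix a (x / 2)) (fun x => frenetMatrix_transpose _ _)
    (fun x k => ?_) h₀ x
  fin_cases k <;>
    [refine (h.hasDerivAt_tangent x).congr_deriv ?_; refine (h.hasDerivAt_normal x).congr_deriv ?_;
      refine (h.hasDerivAt_binormal x).congr_deriv ?_] <;>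
    ext i <;> simp [frenetMatrix, mul_apply, Fin.sum_univ_three]

theorem exists_tendsto_atTop (h : IsSelfSimilarFrenet a T n b) {x₀ : ℝ}
    (h₀ : IsOrthonormalFrame (T x₀) (n x₀) (b x₀)) :
    ∃ A : Fin 3 → ℝ, Tendsto T atTop (𝓝 A) ∧ A ⬝ᵥ A = 1 := by
  have frame := h.isOrthonormalFrame h₀
  obtain ⟨A, hA⟩ := exists_tendsto_atTop_of_hasDerivAt_of_norm_le h.hasDerivAt_tangent
    h.hasDerivAt_binormal fun x => norm_le_one_of_dotProduct_self_eq_one (frame x).2.2.1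
  have hAA : Tendsto (fun x => T x ⬝ᵥ T x) atTop (𝓝 (A ⬝ᵥ A)) :=
    ((continuous_id.dotProduct continuous_id).tendsto A).comp hA
  refine ⟨A, hA, tendsto_nhds_unique hAA ?_⟩
  simp [(frame _).1]

end IsSelfSimilarFrenet

theorem selfsimilar_frenet_tangent_limits_general
    (a : ℝ) (T n b : ℝ → Fin 3 → ℝ)
    (hT : ∀ x : ℝ, HasDerivAt T (a • n x) x)
    (hn : ∀ x : ℝ, HasDerivAt n (-(a • T x) + (x / 2) • b x) x)
    (hb : ∀ x : ℝ, HasDerivAt b (-((x / 2) • n x)) x)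
    (h0 : IsOrthonormalFrame (T 0) (n 0) (b 0)) :
    ∃ Aplus Aminus : Fin 3 → ℝ,
      Tendsto T atTop (nhds Aplus) ∧ Tendsto T atBot (nhds Aminus) ∧
      Aplus ⬝ᵥ Aplus = 1 ∧ Aminus ⬝ᵥ Aminus = 1 := by
  have h : IsSelfSimilarFrenet a T n b := ⟨hT, hn, hb⟩
  obtain ⟨Aplus, hplus, hAplus⟩ := h.exists_tendsto_atTop h0
  obtain ⟨Aminus, hminus, hAminus⟩ := h.comp_neg.exists_tendsto_atTop
    (x₀ := 0) (by simpa using h0.neg_normal_binormal)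
  refine ⟨Aplus, Aminus, hplus, ?_, hAplus, hAminus⟩
  simpa [Function.comp_def] using hminus.comp tendsto_neg_atBot_atTop

/-- the tangent of the self-similar Frenet frame has unit-vector
limits at `±∞`. -/
theorem selfsimilar_frenet_tangent_limits
    (a : ℝ) (ha : 0 < a) (T n b : ℝ → Fin 3 → ℝ)
    (hT : ∀ x : ℝ, HasDerivAt T (a • n x) x)
    (hn : ∀ x : ℝ, HasDerivAt n (-(a • T x) + (x / 2) • b x) x)
    (hb : ∀ x : ℝ, HasDerivAt b (-((x / 2) • n x)) x)
    (h0 : IsOrthonormalFrame (T 0) (n 0) (b 0)) :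
    ∃ Aplus Aminus : Fin 3 → ℝ,
      Tendsto T atTop (nhds Aplus) ∧ Tendsto T atBot (nhds Aminus) ∧
      Aplus ⬝ᵥ Aplus = 1 ∧ Aminus ⬝ᵥ Aminus = 1 :=
  selfsimilar_frenet_tangent_limits_general a T n b hT hn hb h0
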